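/- arXiv:1405.6678 — 3 statements merged into one kernel-verified Lean document; each statement's English description precedes it below -/
import Mathlib

section
/- If M is a linear lambda term and M beta-eta-reduces to N, then N is also a linear lambda term. -/
inductive Tm : Type
  | var : ℕ → Tm
  | app : Tm → Tm → Tm
  | lam : ℕ → Tm → Tm
  deriving DecidableEq

namespace Tm

/-- number of free occurrences of variable `x` in a term -/
def countFree (x : ℕ) : Tm → ℕ
  | var y => if y = x then 1 else 0
  | app M N => countFree x M + countFree x N
  | lam y N => if y = x then 0 else countFree x N

/-- every abstraction in the term binds exactly one occurrence of its variable -/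
def LinearBody : Tm → Prop
  | var _ => True
  | app M N => LinearBody M ∧ LinearBody N
  | lam y N => LinearBody N ∧ countFree y N = 1

/-- A linear lambda term: every abstraction binds exactly one occurrence,
and every free variable occurs exactly once. -/
def Linear (M : Tm) : Prop := LinearBody M ∧ ∀ x, countFree x M ≤ 1

/-- `y` occurs as a binder somewhere in the term -/
def Binds (y : ℕ) : Tm → Prop
  | var _ => False
  | app M N => Binds y M ∨ Binds y N
  | lam z M => z = y ∨ Binds y M

def subst (x : ℕ) (N : Tm) : Tm → Tm
  | var y => if y = x then N else var y
  | app P Q => app (subst x N P) (subst x N Q)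
  | lam y P => if y = x then lam y P else lam y (subst x N P)

/-- one-step beta-eta reduction -/
inductive Step : Tm → Tm → Prop
  | beta (x : ℕ) (M N : Tm) : (∀ y, countFree y N ≠ 0 → ¬ Binds y M) →
      Step (app (lam x M) N) (subst x N M)
  | eta (x : ℕ) (M : Tm) : countFree x M = 0 → Step (lam x (app M (var x))) M
  | appL {M M' : Tm} (N : Tm) : Step M M' → Step (app M N) (app M' N)
  | appR (M : Tm) {N N' : Tm} : Step N N' → Step (app M N) (app M N')
  | xi (y : ℕ) {M M' : Tm} : Step M M' → Step (lam y M) (lam y M')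

/-- many-step beta-eta reduction -/
def Reduces : Tm → Tm → Prop := Relation.ReflTransGen Step

/-- beta-eta convertibility -/
def BetaEtaEq : Tm → Tm → Prop := Relation.EqvGen Step


/-- Substituting `N` into `M` captures no variable. -/
def NoCapture (N M : Tm) : Prop := ∀ z, countFree z N ≠ 0 → ¬ Binds z M

namespace NoCapture

variable {N P Q : Tm} {y : ℕ}

lemma app_left (h : NoCapture N (app P Q)) : NoCapture N P :=
  fun z hz hb => h z hz (Or.inl hb)

lemma app_right (h : NoCapture N (app P Q)) : NoCapture N Q :=
  fun z hz hb => h z hz (Or.inr hb)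

lemma lam_body (h : NoCapture N (lam y P)) : NoCapture N P :=
  fun z hz hb => h z hz (Or.inr hb)

lemma countFree_binder (h : NoCapture N (lam y P)) : countFree y N = 0 :=
  by_contra fun hy => h y hy (Or.inl rfl)

end NoCapture

lemma countFree_subst (y : ℕ) (N : Tm) {M : Tm} (h : NoCapture N M) (x : ℕ) :
    countFree x (subst y N M) =
      (if x = y then 0 else countFree x M) + countFree y M * countFree x N := by
  induction M with
  | var w =>
    by_cases hwy : w = y
    · subst hwy
      by_cases hxw : x = w
      · subst hxw; simp [subst, countFree]
      · simp [subst, countFree, hxw, Ne.symm hxw]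
    · by_cases hxy : x = y
      · subst hxy; simp [subst, countFree, hwy]
      · simp [subst, countFree, hwy, hxy]
  | app P Q ihP ihQ =>
    simp only [subst, countFree, ihP h.app_left, ihQ h.app_right]
    split_ifs <;> ring
  | lam z P ih =>
    by_cases hzy : z = y
    · subst hzy
      by_cases hxz : x = z <;> simp [subst, countFree, hxz]
    · simp only [subst, countFree, if_neg hzy]
      by_cases hzx : z = x
      · subst hzx
        simp [h.countFree_binder]
      · simp only [if_neg hzx, ih h.lam_body]

lemma linearBody_subst (y : ℕ) {N M : Tm} (hN : LinearBody N) (hM : LinearBody M)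
    (h : NoCapture N M) : LinearBody (subst y N M) := by
  induction M with
  | var w => by_cases hwy : w = y <;> simp [subst, hwy, hN, LinearBody]
  | app P Q ihP ihQ => exact ⟨ihP hM.1 h.app_left, ihQ hM.2 h.app_right⟩
  | lam z P ih =>
    by_cases hzy : z = y
    · simpa [subst, hzy] using hM
    · simp only [subst, if_neg hzy]
      refine ⟨ih hM.1 h.lam_body, ?_⟩
      rw [countFree_subst y N h.lam_body, h.countFree_binder, if_neg hzy, mul_zero, add_zero]
      exact hM.2

namespace Step

variable {M M' : Tm}

/-- Reduction of a term whose abstractions are all linear neither duplicates nor erases free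
variables: a beta-redex substitutes its argument for exactly one occurrence. -/
lemma countFree_eq (s : Step M M') (hM : LinearBody M) (z : ℕ) :
    countFree z M' = countFree z M := by
  induction s generalizing z with
  | beta x P N h =>
    rw [countFree_subst x N h, hM.1.2, one_mul]
    by_cases hz : z = x
    · subst hz; simp [countFree]
    · simp [countFree, hz, Ne.symm hz]
  | eta x P h =>
    by_cases hz : x = z
    · subst hz; simp [countFree, h]
    · simp [countFree, hz]
  | appL _ _ ih => simp [countFree, ih hM.1 z]
  | appR _ _ ih => simp [countFree, ih hM.2 z]
  | xi _ _ ih => simp [countFree, ih hM.1 z]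

lemma linearBody (s : Step M M') (hM : LinearBody M) : LinearBody M' := by
  induction s with
  | beta x P N h => exact linearBody_subst x hM.2 hM.1.1 h
  | eta => exact hM.1.1
  | appL _ _ ih => exact ⟨ih hM.1, hM.2⟩
  | appR _ _ ih => exact ⟨hM.1, ih hM.2⟩
  | xi y s ih => exact ⟨ih hM.1, (s.countFree_eq hM.1 y).trans hM.2⟩

lemma linear (s : Step M M') (hM : Linear M) : Linear M' :=
  ⟨s.linearBody hM.1, fun x => (s.countFree_eq hM.1 x).trans_le (hM.2 x)⟩

end Step

end Tm

/-- if `M` is a linear lambda term and `M` beta-eta-reduces to `N`,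
then `N` is also a linear lambda term. -/
theorem linear_preserved_by_betaEta_reduction (M N : Tm)
    (hM : Tm.Linear M) (h : Tm.Reduces M N) : Tm.Linear N := by
  induction h with
  | refl => exact hM
  | tail _ s ih => exact s.linear ih
end

section
/- If M is a linear lambda term with free variables x_1,...,x_n, then the principal type alpha_1 → ... → alpha_n → beta of lambda x_1 ... lambda x_n. M is balanced, i.e., every atomic type occurring in it occurs exactly twice. -/
inductive Ty : Type
  | atom : ℕ → Ty
  | arrow : Ty → Ty → Ty
  deriving DecidableEq

namespace Ty
/-- apply a type substitution -/
def substT (s : ℕ → Ty) : Ty → Ty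
  | atom n => s n
  | arrow a b => arrow (substT s a) (substT s b)
end Ty

/-- Curry-style simple typing, contexts as association lists with lookup -/
def lookupCtx : List (ℕ × Ty) → ℕ → Option Ty
  | [], _ => none
  | (y, α) :: Γ, x => if x = y then some α else lookupCtx Γ x

inductive STyping : List (ℕ × Ty) → Tm → Ty → Prop
  | var {Γ x α} : lookupCtx Γ x = some α → STyping Γ (Tm.var x) α
  | app {Γ M N α β} : STyping Γ M (Ty.arrow α β) → STyping Γ N α →
      STyping Γ (Tm.app M N) β
  | lam {Γ x α M β} : STyping ((x, α) :: Γ) M β →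
      STyping Γ (Tm.lam x M) (Ty.arrow α β)

/-- `α` is a principal type of `M` -/
def PrincipalType (M : Tm) (α : Ty) : Prop :=
  (∃ Γ, STyping Γ M α) ∧ ∀ Γ β, STyping Γ M β → ∃ s, Ty.substT s α = β

def countAtom (n : ℕ) : Ty → ℕ
  | .atom m => if m = n then 1 else 0
  | .arrow a b => countAtom n a + countAtom n b

/-- every atomic type occurring in the type occurs exactly twice -/
def BalancedTy (α : Ty) : Prop := ∀ n, countAtom n α ≠ 0 → countAtom n α = 2

/-! Every typing of a linear term is an instance of a typing whose sequent (the type together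
with the types of the free variables) is balanced. Such a typing is built along the term: a
variable gets `a ⊢ a`, an abstraction moves the type of its variable from the context into the
type, and an application renames the sequents of its two parts apart and unifies `τ_P = τ_Q → c`
for a fresh atom `c`. Unification preserves balance: when the equations and the sequent are
jointly balanced, an elimination `a := ρ` drops the equation and replaces the only other
occurrence of `a` by `ρ`, so every atom of `ρ` keeps its number of occurrences.

For a closed term this yields a balanced type `τ` of which the principal type `α` is an instance;
by principality `τ` is also an instance of `α`, so the two differ by a renaming of atoms. -/

open Function

namespace Ty

def size : Ty → ℕ
  | atom _ => 1
  | arrow a b => a.size + b.size + 1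

theorem size_pos (τ : Ty) : 0 < τ.size := by
  cases τ <;> simp [size]

theorem substT_substT (t s : ℕ → Ty) (τ : Ty) :
    substT t (substT s τ) = substT (fun n => substT t (s n)) τ := by
  induction τ with
  | atom n => rfl
  | arrow a b iha ihb => simp [substT, iha, ihb]

theorem substT_atom (τ : Ty) : substT atom τ = τ := by
  induction τ with
  | atom n => rfl
  | arrow a b iha ihb => simp [substT, iha, ihb]

theorem substT_congr {s t : ℕ → Ty} {τ : Ty} (h : ∀ n, countAtom n τ ≠ 0 → s n = t n) :
    substT s τ = substT t τ := by
  induction τ with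
  | atom n => exact h n (by simp [countAtom])
  | arrow a b iha ihb =>
    simp only [countAtom] at h
    rw [substT, substT, iha fun n hn => h n (by omega), ihb fun n hn => h n (by omega)]

theorem size_le_size_substT {a : ℕ} {τ : Ty} (h : countAtom a τ ≠ 0) (s : ℕ → Ty) :
    (s a).size ≤ (substT s τ).size := by
  induction τ with
  | atom k =>
    obtain rfl : k = a := by by_contra hk; simp [countAtom, hk] at h
    rfl
  | arrow x y ihx ihy =>
    simp only [countAtom] at h
    simp only [substT, size]
    by_cases hx : countAtom a x = 0
    · have := ihy (by omega); omega
    · have := ihx hx; omega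

theorem countAtom_eq_zero_of_substT_eq {σ : ℕ → Ty} {a : ℕ} {ρ : Ty}
    (h : σ a = substT σ ρ) (hρ : ρ ≠ atom a) : countAtom a ρ = 0 := by
  cases ρ with
  | atom k =>
    simp only [countAtom, ite_eq_right_iff, one_ne_zero, imp_false]
    rintro rfl
    exact hρ rfl
  | arrow x y =>
    by_contra ha
    have hlt : (σ a).size < (substT σ (arrow x y)).size := by
      simp only [countAtom] at ha
      simp only [substT, size]
      by_cases hx : countAtom a x = 0
      · have := size_le_size_substT (a := a) (τ := y) (by omega) σ; omega
      · have := size_le_size_substT hx σ; omega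
    exact hlt.ne (congrArg size h)

theorem countAtom_substT_of_forall {t : ℕ → Ty} {τ : Ty} {m n : ℕ}
    (h : ∀ k, countAtom k τ ≠ 0 → countAtom m (t k) = if k = n then 1 else 0) :
    countAtom m (substT t τ) = countAtom n τ := by
  induction τ with
  | atom k => exact h k (by simp [countAtom])
  | arrow a b iha ihb =>
    simp only [countAtom] at h ⊢
    rw [substT, countAtom, iha fun k hk => h k (by omega), ihb fun k hk => h k (by omega)]

theorem countAtom_substT_eq_zero {t : ℕ → Ty} {τ : Ty} {m : ℕ}
    (h : ∀ k, countAtom k τ ≠ 0 → countAtom m (t k) = 0) : countAtom m (substT t τ) = 0 := by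
  induction τ with
  | atom k => exact h k (by simp [countAtom])
  | arrow a b iha ihb =>
    simp only [countAtom] at h ⊢
    rw [substT, countAtom, iha fun k hk => h k (by omega), ihb fun k hk => h k (by omega)]

theorem countAtom_substT_update {a : ℕ} {ρ : Ty} (ha : countAtom a ρ = 0) (m : ℕ) (τ : Ty) :
    countAtom m (substT (update atom a ρ) τ) =
      (if m = a then 0 else countAtom m τ) + countAtom a τ * countAtom m ρ := by
  induction τ with
  | atom k =>
    by_cases hk : k = a
    · subst hk
      by_cases hm : m = k
      · simp [substT, countAtom, hm, ha]
      · simp [substT, countAtom, hm, Ne.symm hm]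
    · simp [substT, countAtom, update_of_ne hk]; split_ifs <;> omega
  | arrow x y ihx ihy =>
    simp only [substT, countAtom, ihx, ihy]
    split_ifs <;> ring

theorem size_substT_update {a : ℕ} {ρ : Ty} (τ : Ty) :
    (substT (update atom a ρ) τ).size + countAtom a τ = τ.size + countAtom a τ * ρ.size := by
  induction τ with
  | atom k =>
    by_cases hk : k = a
    · subst hk; simp [substT, countAtom, size, add_comm]
    · simp [substT, countAtom, size, hk]
  | arrow x y ihx ihy =>
    simp only [substT, countAtom, size]
    linarith

theorem substT_update_of_countAtom_eq_zero {a : ℕ} {ρ τ : Ty} (h : countAtom a τ = 0) :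
    substT (update atom a ρ) τ = τ := by
  conv_rhs => rw [← substT_atom τ]
  exact substT_congr fun n hn => update_of_ne (by rintro rfl; exact hn h) _ _

theorem substT_substT_update {σ : ℕ → Ty} {a : ℕ} {ρ : Ty} (h : σ a = substT σ ρ) (τ : Ty) :
    substT σ (substT (update atom a ρ) τ) = substT σ τ := by
  rw [substT_substT]
  congr 1
  funext n
  by_cases hn : n = a
  · subst hn; simp [h]
  · simp [update_of_ne hn, substT]

theorem eq_atom_of_substT_eq_self {u : ℕ → Ty} {τ : Ty} (h : substT u τ = τ) {k : ℕ}
    (hk : countAtom k τ ≠ 0) : u k = atom k := by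
  induction τ with
  | atom n =>
    obtain rfl : n = k := by by_contra hnk; simp [countAtom, hnk] at hk
    exact h
  | arrow a b iha ihb =>
    simp only [substT, arrow.injEq] at h
    simp only [countAtom] at hk
    by_cases ha : countAtom k a = 0
    · exact ihb h.2 (by omega)
    · exact iha h.1 ha

end Ty

open Ty

def countAtoms (n : ℕ) (L : List Ty) : ℕ := (L.map (countAtom n)).sum

def BalancedList (L : List Ty) : Prop := ∀ n, countAtoms n L = 0 ∨ countAtoms n L = 2

@[simp] theorem countAtoms_nil (n : ℕ) : countAtoms n [] = 0 := rfl

@[simp] theorem countAtoms_cons (n : ℕ) (τ : Ty) (L : List Ty) :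
    countAtoms n (τ :: L) = countAtom n τ + countAtoms n L := List.sum_cons

@[simp] theorem countAtoms_append (n : ℕ) (L L' : List Ty) :
    countAtoms n (L ++ L') = countAtoms n L + countAtoms n L' := by
  simp [countAtoms]

theorem countAtoms_map_substT_update {a : ℕ} {ρ : Ty} (ha : countAtom a ρ = 0) (m : ℕ)
    (L : List Ty) :
    countAtoms m (L.map (substT (update atom a ρ))) =
      (if m = a then 0 else countAtoms m L) + countAtoms a L * countAtom m ρ := by
  induction L with
  | nil => simp
  | cons τ L ih =>
    simp only [List.map_cons, countAtoms_cons, ih, countAtom_substT_update ha]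
    split_ifs <;> ring

theorem BalancedList.countAtoms_eq_one {a : ℕ} {ρ : Ty} {L : List Ty}
    (h : BalancedList (atom a :: ρ :: L)) (ha : countAtom a ρ = 0) : countAtoms a L = 1 := by
  have := h a
  simp only [countAtoms_cons, countAtom, if_pos, ha] at this
  omega

theorem BalancedList.map_substT_update {a : ℕ} {ρ : Ty} {L : List Ty}
    (h : BalancedList (atom a :: ρ :: L)) (ha : countAtom a ρ = 0) :
    BalancedList (L.map (substT (update atom a ρ))) := by
  intro n
  rw [countAtoms_map_substT_update ha, h.countAtoms_eq_one ha, one_mul]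
  by_cases hn : n = a
  · simp [hn, ha]
  · have := h n
    simp only [countAtoms_cons, countAtom, if_neg (Ne.symm hn)] at this
    simp only [if_neg hn]
    omega

theorem sum_size_map_substT_update {a : ℕ} {ρ : Ty} (L : List Ty) :
    ((L.map (substT (update atom a ρ))).map size).sum + countAtoms a L =
      (L.map size).sum + countAtoms a L * ρ.size := by
  induction L with
  | nil => simp
  | cons τ L ih =>
    have := size_substT_update (a := a) (ρ := ρ) τ
    simp only [List.map_cons, List.sum_cons, countAtoms_cons]
    linarith

theorem BalancedList.sum_size_map_substT_update_lt {a : ℕ} {ρ : Ty} {L : List Ty}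
    (h : BalancedList (atom a :: ρ :: L)) (ha : countAtom a ρ = 0) :
    ((L.map (substT (update atom a ρ))).map size).sum < ((atom a :: ρ :: L).map size).sum := by
  have := sum_size_map_substT_update (a := a) (ρ := ρ) L
  rw [h.countAtoms_eq_one ha, one_mul] at this
  simp only [List.map_cons, List.sum_cons, size]
  omega

def eqTypes (E : List (Ty × Ty)) : List Ty := E.flatMap fun p => [p.1, p.2]

@[simp] theorem eqTypes_nil : eqTypes [] = [] := rfl

@[simp] theorem eqTypes_cons (τ ρ : Ty) (E : List (Ty × Ty)) :
    eqTypes ((τ, ρ) :: E) = τ :: ρ :: eqTypes E := rfl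

theorem eqTypes_map (f : Ty → Ty) (E : List (Ty × Ty)) :
    eqTypes (E.map (Prod.map f f)) = (eqTypes E).map f := by
  induction E with
  | nil => rfl
  | cons p E ih => simp [eqTypes] at ih ⊢; exact ih

def Unifies (u : ℕ → Ty) (E : List (Ty × Ty)) : Prop := ∀ p ∈ E, substT u p.1 = substT u p.2

@[simp] theorem unifies_nil (u : ℕ → Ty) : Unifies u [] := by simp [Unifies]

@[simp] theorem unifies_cons {u : ℕ → Ty} {τ ρ : Ty} {E : List (Ty × Ty)} :
    Unifies u ((τ, ρ) :: E) ↔ substT u τ = substT u ρ ∧ Unifies u E := by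
  simp [Unifies]

def HasBalancedUnifier (σ : ℕ → Ty) (E : List (Ty × Ty)) (S : List Ty) : Prop :=
  ∃ u r : ℕ → Ty, Unifies u E ∧ (∀ n, substT r (u n) = σ n) ∧ BalancedList (S.map (substT u))

theorem HasBalancedUnifier.congr {σ : ℕ → Ty} {E E' : List (Ty × Ty)} {S : List Ty}
    (h : HasBalancedUnifier σ E S) (hE : ∀ u, Unifies u E → Unifies u E') :
    HasBalancedUnifier σ E' S :=
  let ⟨u, r, hu, hr, hS⟩ := h
  ⟨u, r, hE u hu, hr, hS⟩

theorem hasBalancedUnifier_nil {σ : ℕ → Ty} {S : List Ty} (hS : BalancedList S) :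
    HasBalancedUnifier σ [] S :=
  ⟨atom, σ, unifies_nil _, fun _ => rfl, by
    rwa [show substT atom = id from funext substT_atom, List.map_id]⟩

/-- The unifier is that of the reduced problem, precomposed with `[ρ/a]`. -/
theorem HasBalancedUnifier.of_map_update {σ : ℕ → Ty} {a : ℕ} {ρ : Ty}
    {E : List (Ty × Ty)} {S : List Ty} (ha : countAtom a ρ = 0) (hσ : σ a = substT σ ρ)
    (h : HasBalancedUnifier σ
      (E.map (Prod.map (substT (update atom a ρ)) (substT (update atom a ρ))))
      (S.map (substT (update atom a ρ)))) :
    HasBalancedUnifier σ ((atom a, ρ) :: E) S := by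
  obtain ⟨u, r, hu, hr, hS⟩ := h
  have hcomp : substT (fun n => substT u (update atom a ρ n)) =
      substT u ∘ substT (update atom a ρ) := funext fun τ => (substT_substT _ _ _).symm
  have hru : (fun n => substT r (u n)) = σ := funext hr
  refine ⟨fun n => substT u (update atom a ρ n), r, ?_, fun n => ?_, ?_⟩
  · refine unifies_cons.2 ⟨?_, fun p hp => ?_⟩
    · rw [hcomp, comp_apply, comp_apply, substT_update_of_countAtom_eq_zero ha]
      simp [substT]
    · rw [hcomp, comp_apply, comp_apply]
      exact hu _ (List.mem_map_of_mem hp)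
  · show substT r (substT u (update atom a ρ n)) = σ n
    rw [substT_substT, hru]
    exact substT_substT_update hσ (atom n)
  · rwa [hcomp, ← List.map_map]

theorem hasBalancedUnifier_of_balanced {σ : ℕ → Ty} {E : List (Ty × Ty)} {S : List Ty}
    (hσ : Unifies σ E) (hbal : BalancedList (eqTypes E ++ S)) : HasBalancedUnifier σ E S := by
  -- Every step lowers the total size; an elimination `a := ρ` does so because balance leaves
  -- exactly one occurrence of `a` outside the equation.
  induction hk : ((eqTypes E ++ S).map size).sum using Nat.strong_induction_on
    generalizing E S with
  | _ k ih =>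
  rcases E with _ | ⟨⟨τ, ρ⟩, E⟩
  · exact hasBalancedUnifier_nil (by simpa using hbal)
  simp only [eqTypes_cons, List.cons_append, List.map_cons, List.sum_cons] at hbal hk
  obtain ⟨hτρ, hσE⟩ := unifies_cons.1 hσ
  have elim {a : ℕ} {ρ' : Ty} (hne : ρ' ≠ atom a) (hσa : σ a = substT σ ρ')
      (hb : BalancedList (atom a :: ρ' :: (eqTypes E ++ S)))
      (hsize : (atom a).size + ρ'.size = τ.size + ρ.size) :
      HasBalancedUnifier σ ((atom a, ρ') :: E) S := by
    have ha := countAtom_eq_zero_of_substT_eq hσa hne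
    have hb' := hb.map_substT_update ha
    have hlt := hb.sum_size_map_substT_update_lt ha
    rw [List.map_append, ← eqTypes_map] at hb' hlt
    refine HasBalancedUnifier.of_map_update ha hσa (ih _ ?_ ?_ hb' rfl)
    · simp only [List.map_cons, List.sum_cons] at hlt
      omega
    · intro p hp
      obtain ⟨q, hq, rfl⟩ := List.mem_map.1 hp
      simp only [Prod.map_fst, Prod.map_snd, substT_substT_update hσa]
      exact hσE q hq
  by_cases heq : τ = ρ
  · subst heq
    refine (ih _ ?_ hσE ?_ rfl).congr fun u hu => unifies_cons.2 ⟨rfl, hu⟩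
    · have := size_pos τ; omega
    · intro n; have := hbal n; simp only [countAtoms_cons] at this; omega
  match τ, ρ, heq with
  | atom a, ρ, heq => exact elim (Ne.symm heq) hτρ hbal rfl
  | arrow x y, atom a, heq =>
    refine (elim heq hτρ.symm (fun n => ?_) (add_comm _ _)).congr fun u hu => ?_
    · have := hbal n; simp only [countAtoms_cons] at this ⊢; omega
    · obtain ⟨h1, h2⟩ := unifies_cons.1 hu; exact unifies_cons.2 ⟨h1.symm, h2⟩
  | arrow x y, arrow z w, _ =>
    refine (ih _ ?_ (E := (x, z) :: (y, w) :: E) ?_ ?_ rfl).congr fun u hu => ?_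
    · simp only [eqTypes_cons, List.cons_append, List.map_cons, List.sum_cons, size] at hk ⊢
      omega
    · simp_all [substT]
    · intro n
      have := hbal n
      simp only [eqTypes_cons, List.cons_append, countAtoms_cons, countAtom] at this ⊢
      omega
    · simp_all [substT]

namespace Tm

def fv : Tm → List ℕ
  | var x => [x]
  | app M N => fv M ++ fv N
  | lam y M => (fv M).filter (· ≠ y)

theorem count_fv (x : ℕ) (M : Tm) : (fv M).count x = countFree x M := by
  induction M with
  | var y => by_cases h : y = x <;> simp [fv, countFree, h]
  | app M N ihM ihN => simp [fv, countFree, ihM, ihN]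
  | lam y M ih =>
    by_cases h : y = x
    · subst h; simp [fv, countFree, List.count_eq_zero]
    · simp [fv, countFree, h, List.count_filter, Ne.symm h, ih]

theorem mem_fv {x : ℕ} {M : Tm} : x ∈ fv M ↔ countFree x M ≠ 0 := by
  rw [← count_fv, Ne, List.count_eq_zero, not_not]

theorem countFree_foldr_lam (x : ℕ) (xs : List ℕ) (M : Tm) :
    countFree x (xs.foldr lam M) = if x ∈ xs then 0 else countFree x M := by
  induction xs with
  | nil => simp
  | cons y xs ih =>
    by_cases hxy : y = x
    · simp [countFree, hxy]
    · simp [countFree, ih, hxy, Ne.symm hxy]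

theorem linearBody_foldr_lam {xs : List ℕ} {M : Tm} (hxs : xs.Nodup)
    (hM : ∀ y ∈ xs, countFree y M = 1) (hlin : M.LinearBody) : (xs.foldr lam M).LinearBody := by
  induction xs with
  | nil => exact hlin
  | cons y xs ih =>
    obtain ⟨hy, hxs⟩ := List.nodup_cons.1 hxs
    refine ⟨ih hxs fun z hz => hM z (List.mem_cons_of_mem y hz), ?_⟩
    rw [countFree_foldr_lam, if_neg hy]
    exact hM y List.mem_cons_self

end Tm

def ctx (γ : ℕ → Ty) (xs : List ℕ) : List (ℕ × Ty) := xs.map fun x => (x, γ x)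

theorem lookupCtx_ctx (γ : ℕ → Ty) (xs : List ℕ) (x : ℕ) :
    lookupCtx (ctx γ xs) x = if x ∈ xs then some (γ x) else none := by
  induction xs with
  | nil => rfl
  | cons y xs ih => by_cases h : x = y <;> simp_all [ctx, lookupCtx]

theorem lookupCtx_map_substT (s : ℕ → Ty) (Γ : List (ℕ × Ty)) (x : ℕ) :
    lookupCtx (Γ.map (Prod.map id (substT s))) x = (lookupCtx Γ x).map (substT s) := by
  induction Γ with
  | nil => rfl
  | cons p Γ ih => by_cases h : x = p.1 <;> simp [lookupCtx, h, ih]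

theorem STyping.subst {Γ : List (ℕ × Ty)} {M : Tm} {τ : Ty} (h : STyping Γ M τ)
    (s : ℕ → Ty) : STyping (Γ.map (Prod.map id (substT s))) M (substT s τ) := by
  induction h with
  | var h => exact .var (by rw [lookupCtx_map_substT, h]; rfl)
  | app _ _ ih₁ ih₂ => exact .app ih₁ ih₂
  | lam _ ih => exact .lam ih

theorem STyping.congr {Γ Δ : List (ℕ × Ty)} {M : Tm} {τ : Ty} (h : STyping Γ M τ)
    (hΔ : ∀ x ∈ M.fv, lookupCtx Δ x = lookupCtx Γ x) : STyping Δ M τ := by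
  induction h generalizing Δ with
  | var h => exact .var (by rw [hΔ _ (by simp [Tm.fv]), h])
  | app _ _ ih₁ ih₂ =>
    exact .app (ih₁ fun x hx => hΔ x (by simp [Tm.fv, hx]))
      (ih₂ fun x hx => hΔ x (by simp [Tm.fv, hx]))
  | @lam _ y _ _ _ _ ih =>
    refine .lam (ih fun x hx => ?_)
    by_cases hxy : x = y
    · simp [lookupCtx, hxy]
    · simp [lookupCtx, hxy, hΔ x (by simp [Tm.fv, hx, hxy])]

theorem STyping.subst_ctx {γ : ℕ → Ty} {xs : List ℕ} {M : Tm} {τ : Ty}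
    (h : STyping (ctx γ xs) M τ) (s : ℕ → Ty) :
    STyping (ctx (fun x => substT s (γ x)) xs) M (substT s τ) := by
  simpa [ctx, Function.comp_def] using h.subst s

theorem countAtoms_map_rename {e : ℕ → ℕ} (he : Injective e) (n : ℕ) (L : List Ty) :
    countAtoms (e n) (L.map (substT fun k => atom (e k))) = countAtoms n L := by
  simp only [countAtoms, List.map_map]
  congr 1
  refine List.map_congr_left fun τ _ => countAtom_substT_of_forall fun k _ => ?_
  simp [countAtom, he.eq_iff]

theorem countAtoms_map_rename_of_forall_ne {e : ℕ → ℕ} {m : ℕ} (hm : ∀ k, e k ≠ m)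
    (L : List Ty) : countAtoms m (L.map (substT fun k => atom (e k))) = 0 := by
  simp only [countAtoms, List.map_map, List.sum_eq_zero_iff, List.mem_map]
  rintro _ ⟨τ, _, rfl⟩
  exact countAtom_substT_eq_zero fun k _ => by simp [countAtom, hm k]

theorem BalancedList.rename_apart {L L' : List Ty} (h : BalancedList L) (h' : BalancedList L') :
    BalancedList (atom 2 :: atom 2 :: (L.map (substT fun n => atom (3 * n)) ++
      L'.map (substT fun n => atom (3 * n + 1)))) := by
  have inj₀ : Injective fun n => 3 * n := fun _ _ h => by simp only at h; omega
  have inj₁ : Injective fun n => 3 * n + 1 := fun _ _ h => by simp only at h; omega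
  intro n
  simp only [countAtoms_cons, countAtoms_append, countAtom]
  obtain ⟨k, rfl | rfl | rfl⟩ : ∃ k, n = 3 * k ∨ n = 3 * k + 1 ∨ n = 3 * k + 2 :=
    ⟨n / 3, by omega⟩
  · rw [countAtoms_map_rename inj₀, countAtoms_map_rename_of_forall_ne (by omega)]
    have := h k; split_ifs <;> omega
  · rw [countAtoms_map_rename inj₁, countAtoms_map_rename_of_forall_ne (by omega)]
    have := h' k; split_ifs <;> omega
  · rw [countAtoms_map_rename_of_forall_ne (by omega),
      countAtoms_map_rename_of_forall_ne (by omega)]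
    split_ifs <;> omega

theorem STyping.app_ctx {P Q : Tm} {γ₁ γ₂ : ℕ → Ty} {α β : Ty} (hdisj : ∀ x ∈ P.fv, x ∉ Q.fv)
    (hP : STyping (ctx γ₁ P.fv) P (arrow α β)) (hQ : STyping (ctx γ₂ Q.fv) Q α) :
    STyping (ctx (fun x => if x ∈ P.fv then γ₁ x else γ₂ x) (Tm.app P Q).fv) (Tm.app P Q) β :=
  .app (hP.congr fun x hx => by simp [lookupCtx_ctx, Tm.fv, hx])
    (hQ.congr fun x hx => by
      simp [lookupCtx_ctx, Tm.fv, hx, show x ∉ P.fv from fun h => hdisj x h hx])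

def HasBalancedTyping (M : Tm) (Γ' : List (ℕ × Ty)) (τ' : Ty) : Prop :=
  ∃ (γ : ℕ → Ty) (τ : Ty), STyping (ctx γ M.fv) M τ ∧ BalancedList (τ :: M.fv.map γ) ∧
    ∃ s, substT s τ = τ' ∧ ∀ x ∈ M.fv, lookupCtx Γ' x = some (substT s (γ x))

theorem hasBalancedTyping_var {Γ' : List (ℕ × Ty)} {x : ℕ} {τ' : Ty}
    (h : lookupCtx Γ' x = some τ') : HasBalancedTyping (Tm.var x) Γ' τ' := by
  refine ⟨fun _ => atom 0, atom 0, .var (by simp [lookupCtx_ctx, Tm.fv]), fun n => ?_,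
    fun _ => τ', rfl, by simpa [Tm.fv, substT] using h⟩
  rcases eq_or_ne n 0 with rfl | hn
  · simp [Tm.fv, countAtom]
  · simp [Tm.fv, countAtom, hn.symm]

theorem HasBalancedTyping.lam {y : ℕ} {N : Tm} {Γ' : List (ℕ × Ty)} {α β : Ty}
    (hy : Tm.countFree y N = 1) (h : HasBalancedTyping N ((y, α) :: Γ') β) :
    HasBalancedTyping (Tm.lam y N) Γ' (arrow α β) := by
  obtain ⟨γ, τ, hty, hbal, s, hs, hctx⟩ := h
  have hyN : y ∈ N.fv := Tm.mem_fv.2 (by omega)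
  have hperm : N.fv.Perm (y :: (Tm.lam y N).fv) := by
    refine List.perm_iff_count.2 fun x => ?_
    by_cases hxy : x = y
    · subst hxy
      rw [Tm.count_fv, hy, List.count_cons_self, Tm.fv, List.count_eq_zero.2 (by simp)]
    · simp [Tm.fv, List.count_filter, hxy, Ne.symm hxy]
  refine ⟨γ, arrow (γ y) τ, .lam (hty.congr fun x hx => ?_), fun n => ?_, s, ?_, fun x hx => ?_⟩
  · by_cases hxy : x = y
    · simp [lookupCtx, lookupCtx_ctx, hxy, hyN]
    · simp [lookupCtx, lookupCtx_ctx, Tm.fv, hxy, hx]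
  · have hcount := ((hperm.map γ).map (countAtom n)).sum_eq
    have := hbal n
    simp only [countAtoms, List.map_cons, List.sum_cons, countAtom] at hcount this ⊢
    omega
  · have := hctx y hyN
    simp only [lookupCtx, if_true, Option.some_inj] at this
    rw [substT, hs, ← this]
  · have hxy : x ≠ y := by simpa [Tm.fv] using (List.mem_filter.1 hx).2
    simpa [lookupCtx, hxy] using hctx x (List.mem_of_mem_filter hx)

theorem HasBalancedTyping.app {P Q : Tm} {Γ' : List (ℕ × Ty)} {α β : Ty}
    (hdisj : ∀ x ∈ P.fv, x ∉ Q.fv) (hP : HasBalancedTyping P Γ' (arrow α β))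
    (hQ : HasBalancedTyping Q Γ' α) : HasBalancedTyping (Tm.app P Q) Γ' β := by
  obtain ⟨γP, τP, htyP, hbalP, sP, hsP, hctxP⟩ := hP
  obtain ⟨γQ, τQ, htyQ, hbalQ, sQ, hsQ, hctxQ⟩ := hQ
  set ρP : ℕ → Ty := fun n => atom (3 * n)
  set ρQ : ℕ → Ty := fun n => atom (3 * n + 1)
  -- The given typing of `P Q`, read on the renamed atoms; `2` is the fresh result atom.
  set σ : ℕ → Ty := fun n => if n % 3 = 0 then sP (n / 3) else if n % 3 = 1 then sQ (n / 3) else β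
  have hσP (τ : Ty) : substT σ (substT ρP τ) = substT sP τ := by
    rw [substT_substT]; congr 1; funext n
    simp [σ, ρP, substT, show 3 * n / 3 = n by omega]
  have hσQ (τ : Ty) : substT σ (substT ρQ τ) = substT sQ τ := by
    rw [substT_substT]; congr 1; funext n
    simp [σ, ρQ, substT, show (3 * n + 1) % 3 = 1 by omega, show (3 * n + 1) / 3 = n by omega]
  obtain ⟨u, r, hu, hr, hbal⟩ := hasBalancedUnifier_of_balanced (σ := σ)
    (E := [(substT ρP τP, arrow (substT ρQ τQ) (atom 2))])
    (S := atom 2 :: ((P.fv.map γP).map (substT ρP) ++ (Q.fv.map γQ).map (substT ρQ)))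
    (by simp [hσP, hσQ, hsP, hsQ, substT, σ])
    (fun n => by
      have := hbalP.rename_apart hbalQ n
      simp only [eqTypes_cons, eqTypes_nil, List.nil_append, List.cons_append, countAtoms_cons,
        List.map_cons, countAtoms_append, countAtom, ρP, ρQ] at this ⊢
      omega)
  have hru (τ : Ty) : substT r (substT u τ) = substT σ τ := by
    rw [substT_substT]; exact congrArg (substT · τ) (funext hr)
  have huPQ : substT u (substT ρP τP) = arrow (substT u (substT ρQ τQ)) (u 2) := by
    simpa [substT] using hu
  refine ⟨_, u 2, STyping.app_ctx hdisj (huPQ ▸ (htyP.subst_ctx ρP).subst_ctx u)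
    ((htyQ.subst_ctx ρQ).subst_ctx u), ?_, r, (hr 2).trans (by simp [σ]), ?_⟩
  · convert hbal using 1
    simp only [Tm.fv, List.map_cons, List.map_append, List.map_map, substT]
    congr 1
    congr 1 <;> refine List.map_congr_left fun x hx => ?_
    · simp [hx]
    · simp [show x ∉ P.fv from fun h => hdisj x h hx]
  · intro x hx
    by_cases hxP : x ∈ P.fv
    · simp [hxP, hru, hσP, hctxP x hxP]
    · simp [hxP, hru, hσQ, hctxQ x (by simpa [Tm.fv, hxP] using hx)]

theorem STyping.hasBalancedTyping {Γ' : List (ℕ × Ty)} {M : Tm} {τ' : Ty} (h : STyping Γ' M τ')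
    (hlin : M.LinearBody) (hcf : ∀ x, M.countFree x ≤ 1) : HasBalancedTyping M Γ' τ' := by
  induction h with
  | var h => exact hasBalancedTyping_var h
  | app _ _ ihP ihQ =>
    simp only [Tm.countFree] at hcf
    refine .app (fun x hP hQ => ?_) (ihP hlin.1 fun x => ?_) (ihQ hlin.2 fun x => ?_)
    · rw [Tm.mem_fv] at hP hQ; have := hcf x; omega
    all_goals have := hcf x; omega
  | @lam _ y _ N _ _ ih =>
    refine .lam hlin.2 (ih hlin.1 fun x => ?_)
    by_cases hxy : y = x
    · exact hxy ▸ hlin.2.le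
    · simpa [Tm.countFree, hxy] using hcf x

/-- Types that are instances of each other differ by a renaming of atoms. -/
theorem BalancedTy.of_substT_eq {s t : ℕ → Ty} {τ α : Ty} (hτ : BalancedTy τ)
    (hs : substT s τ = α) (ht : substT t α = τ) : BalancedTy α := by
  have hren : ∀ k, countAtom k α ≠ 0 → ∃ m, t k = atom m ∧ s m = atom k := by
    intro k hk
    have := eq_atom_of_substT_eq_self (u := fun n => substT s (t n))
      (by rw [← substT_substT, ht, hs]) hk
    cases htk : t k with
    | atom m => exact ⟨m, rfl, by simpa [htk, substT] using this⟩
    | arrow => simp [htk, substT] at this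
  intro n hn
  obtain ⟨m, htn, hsm⟩ := hren n hn
  have hcount : countAtom m τ = countAtom n α := by
    rw [← ht]
    refine countAtom_substT_of_forall fun k hk => ?_
    obtain ⟨m', htk, hsm'⟩ := hren k hk
    have : m' = m ↔ k = n := ⟨fun h => by simpa [h, hsm] using hsm'.symm, fun h => by
      simpa [h, htn] using htk.symm⟩
    simp [htk, countAtom, this]
  rw [← hcount] at hn ⊢
  exact hτ m hn

/-- the principal type of the closure of a linear lambda term
is balanced. -/
theorem principal_type_of_linear_is_balanced
    (M : Tm) (xs : List ℕ) (α : Ty)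
    (hlin : Tm.Linear M) (hnodup : xs.Nodup)
    (hfv : ∀ x, Tm.countFree x M ≠ 0 ↔ x ∈ xs)
    (hpt : PrincipalType (xs.foldr Tm.lam M) α) :
    BalancedTy α := by
  obtain ⟨⟨Γ, hΓ⟩, hprin⟩ := hpt
  have hclosed (x : ℕ) : (xs.foldr Tm.lam M).countFree x = 0 := by
    rw [Tm.countFree_foldr_lam]
    split_ifs with hx
    · rfl
    · exact not_not.1 (mt (hfv x).1 hx)
  have hlinC : (xs.foldr Tm.lam M).LinearBody :=
    Tm.linearBody_foldr_lam hnodup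
      (fun y hy => le_antisymm (hlin.2 y) (Nat.one_le_iff_ne_zero.2 ((hfv y).2 hy))) hlin.1
  obtain ⟨γ, τ, hty, hbal, s, hs, -⟩ :=
    hΓ.hasBalancedTyping hlinC fun x => (hclosed x).trans_le zero_le_one
  have hfvC : (xs.foldr Tm.lam M).fv = [] :=
    List.eq_nil_iff_forall_not_mem.2 fun x hx => Tm.mem_fv.1 hx (hclosed x)
  rw [hfvC] at hty hbal
  obtain ⟨t, ht⟩ := hprin [] τ hty
  exact BalancedTy.of_substT_eq (fun n hn => by simpa [hn] using hbal n) hs ht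
end

section
/- Focused natural deduction proofs in first-order MILL satisfy the subformula property: every formula occurring in a focused proof of Gamma ⊢_p B (or Gamma ⊢_n B) is a subformula of a formula in Gamma or of B. -/
/-- first-order terms: variables and constants -/
inductive FTm : Type
  | fvar : ℕ → FTm
  | fconst : ℕ → FTm
  deriving DecidableEq

namespace FTm
def fv : FTm → Finset ℕ
  | fvar n => {n}
  | fconst _ => ∅
end FTm

/-- formulas of first-order multiplicative intuitionistic linear logic
(the ⊸, ∀ fragment) -/
inductive Fm : Type
  | atom : ℕ → List FTm → Fm
  | impl : Fm → Fm → Fm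
  | all : ℕ → Fm → Fm

namespace Fm

def fv : Fm → Finset ℕ
  | atom _ args => args.foldr (fun t s => t.fv ∪ s) ∅
  | impl A B => A.fv ∪ B.fv
  | all x A => A.fv.erase x

end Fm

def FTm.subst (x : ℕ) (t : FTm) : FTm → FTm
  | .fvar y => if y = x then t else .fvar y
  | .fconst c => .fconst c

def Fm.subst (x : ℕ) (t : FTm) : Fm → Fm
  | .atom p args => .atom p (args.map (FTm.subst x t))
  | .impl A B => .impl (A.subst x t) (B.subst x t)
  | .all y A => if y = x then .all y A else .all y (A.subst x t)

/-- Natural deduction for the ⊸,∀ fragment of first-order multiplicative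
intuitionistic linear logic: contexts are multisets. -/
inductive Deriv : Multiset Fm → Fm → Prop
  | ax (A : Fm) : Deriv {A} A
  | implE {Γ Δ : Multiset Fm} {A B : Fm} :
      Deriv Γ (Fm.impl A B) → Deriv Δ A → Deriv (Γ + Δ) B
  | implI {Γ : Multiset Fm} {A B : Fm} :
      Deriv (A ::ₘ Γ) B → Deriv Γ (Fm.impl A B)
  | allE {Γ : Multiset Fm} {x : ℕ} {A : Fm} (t : FTm) :
      Deriv Γ (Fm.all x A) → Deriv Γ (A.subst x t)
  | allI {Γ : Multiset Fm} {x : ℕ} {A : Fm} :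
      Deriv Γ A → (∀ B ∈ Γ, x ∉ Fm.fv B) → Deriv Γ (Fm.all x A)

/-- Focused natural deduction proof trees, with a polarity flag:
`false` = negative sequent, `true` = positive sequent. -/
inductive FD : Bool → Multiset Fm → Fm → Type
  | ax (A : Fm) : FD false {A} A
  | implE {Γ Δ : Multiset Fm} {A B : Fm} :
      FD false Γ (Fm.impl A B) → FD true Δ A → FD false (Γ + Δ) B
  | allE {Γ : Multiset Fm} {x : ℕ} {A : Fm} (t : FTm) :
      FD false Γ (Fm.all x A) → FD false Γ (A.subst x t)
  | shift {Γ : Multiset Fm} {A : Fm} : FD false Γ A → FD true Γ A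
  | implI {Γ : Multiset Fm} {A B : Fm} :
      FD true (A ::ₘ Γ) B → FD true Γ (Fm.impl A B)
  | allI {Γ : Multiset Fm} {x : ℕ} {A : Fm} :
      FD true Γ A → (∀ B ∈ Γ, x ∉ Fm.fv B) → FD true Γ (Fm.all x A)

/-- all formulas occurring in (some sequent of) a focused proof -/
def FD.formulas : {b : Bool} → {Γ : Multiset Fm} → {C : Fm} → FD b Γ C → Multiset Fm
  | _, _, _, .ax A => A ::ₘ {A}
  | _, _, _, @FD.implE Γ Δ _ B d e => B ::ₘ ((Γ + Δ) + (d.formulas + e.formulas))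
  | _, _, _, @FD.allE Γ x A t d => (A.subst x t) ::ₘ (Γ + d.formulas)
  | _, _, _, @FD.shift Γ A d => A ::ₘ (Γ + d.formulas)
  | _, _, _, @FD.implI Γ A B d => (Fm.impl A B) ::ₘ (Γ + d.formulas)
  | _, _, _, @FD.allI Γ x A d _ => (Fm.all x A) ::ₘ (Γ + d.formulas)

/-- subformulas, up to instantiation of quantified variables by terms -/
inductive Subform : Fm → Fm → Prop
  | refl (A : Fm) : Subform A A
  | implL {A B C : Fm} : Subform C A → Subform C (Fm.impl A B)
  | implR {A B C : Fm} : Subform C B → Subform C (Fm.impl A B)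
  | allS {x : ℕ} {A C : Fm} (t : FTm) : Subform C (A.subst x t) → Subform C (Fm.all x A)

theorem Subform.trans {A B C : Fm} (h1 : Subform A B) (h2 : Subform B C) :
    Subform A C := by
  induction h2 with
  | refl => exact h1
  | implL _ ih => exact .implL (ih h1)
  | implR _ ih => exact .implR (ih h1)
  | allS t _ ih => exact .allS t (ih h1)

theorem FTm.subst_self (x : ℕ) : ∀ t : FTm, FTm.subst x (FTm.fvar x) t = t
  | .fvar y => by simp [FTm.subst]; intro h; simp [h]
  | .fconst c => rfl

theorem Fm.subst_self (x : ℕ) : ∀ A : Fm, Fm.subst x (FTm.fvar x) A = A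
  | .atom p args => by
      simp only [Fm.subst, Fm.atom.injEq, true_and]
      induction args with
      | nil => rfl
      | cons t ts ih => simp [FTm.subst_self x t, ih]
  | .impl A B => by simp [Fm.subst, Fm.subst_self x A, Fm.subst_self x B]
  | .all y A => by
      by_cases h : y = x <;> simp [Fm.subst, h, Fm.subst_self x A]

/-- negative sequents: conclusion is a subformula of the context -/
theorem FD.neg_sub : ∀ {b : Bool} {Γ : Multiset Fm} {C : Fm}, FD b Γ C →
    b = false → ∃ G ∈ Γ, Subform C G := by
  intro b Γ C d
  induction d with
  | ax A => exact fun _ => ⟨A, by simp, .refl A⟩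
  | implE d e ih _ =>
      intro _
      obtain ⟨G, hG, hs⟩ := ih rfl
      exact ⟨G, by simp [hG], (Subform.implR (.refl _)).trans hs⟩
  | allE t d ih =>
      intro _
      obtain ⟨G, hG, hs⟩ := ih rfl
      exact ⟨G, hG, (Subform.allS t (.refl _)).trans hs⟩
  | shift => simp
  | implI => simp
  | allI => simp

/-- focused proofs satisfy the subformula property. -/
theorem focused_subformula_property (b : Bool) (Γ : Multiset Fm) (C : Fm)
    (d : FD b Γ C) :
    ∀ F ∈ d.formulas, (∃ G ∈ Γ, Subform F G) ∨ Subform F C := by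
  induction d with
  | ax A =>
      intro F hF
      simp [FD.formulas] at hF
      subst hF
      exact Or.inr (.refl _)
  | @implE Γ Δ A B d e ihd ihe =>
      intro F hF
      simp only [FD.formulas, Multiset.mem_cons, Multiset.mem_add] at hF
      obtain ⟨G, hG, hs⟩ := d.neg_sub rfl
      rcases hF with rfl | (h | h) | h | h
      · exact Or.inl ⟨G, by simp [hG], (Subform.implR (.refl _)).trans hs⟩
      · exact Or.inl ⟨F, by simp [h], .refl F⟩
      · exact Or.inl ⟨F, by simp [h], .refl F⟩
      · rcases ihd F h with ⟨G', hG', hs'⟩ | hc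
        · exact Or.inl ⟨G', by simp [hG'], hs'⟩
        · exact Or.inl ⟨G, by simp [hG], hc.trans hs⟩
      · rcases ihe F h with ⟨G', hG', hs'⟩ | hc
        · exact Or.inl ⟨G', by simp [hG'], hs'⟩
        · exact Or.inl ⟨G, by simp [hG], (hc.trans (Subform.implL (B := B) (.refl A))).trans hs⟩
  | @allE Γ x A t d ihd =>
      intro F hF
      simp only [FD.formulas, Multiset.mem_cons, Multiset.mem_add] at hF
      rcases hF with rfl | h | h
      · exact Or.inr (.refl _)
      · exact Or.inl ⟨F, h, .refl F⟩
      · rcases ihd F h with h' | hc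
        · exact Or.inl h'
        · obtain ⟨G, hG, hs⟩ := d.neg_sub rfl
          exact Or.inl ⟨G, hG, hc.trans hs⟩
  | @shift Γ A d ihd =>
      intro F hF
      simp only [FD.formulas, Multiset.mem_cons, Multiset.mem_add] at hF
      rcases hF with rfl | h | h
      · exact Or.inr (.refl _)
      · exact Or.inl ⟨F, h, .refl F⟩
      · exact ihd F h
  | @implI Γ A B d ihd =>
      intro F hF
      simp only [FD.formulas, Multiset.mem_cons, Multiset.mem_add] at hF
      rcases hF with rfl | h | h
      · exact Or.inr (.refl _)
      · exact Or.inl ⟨F, h, .refl F⟩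
      · rcases ihd F h with ⟨G, hG, hs⟩ | hc
        · rcases Multiset.mem_cons.1 hG with rfl | hG'
          · exact Or.inr (.implL hs)
          · exact Or.inl ⟨G, hG', hs⟩
        · exact Or.inr (.implR hc)
  | @allI Γ x A d hx ihd =>
      intro F hF
      simp only [FD.formulas, Multiset.mem_cons, Multiset.mem_add] at hF
      rcases hF with rfl | h | h
      · exact Or.inr (.refl _)
      · exact Or.inl ⟨F, h, .refl F⟩
      · rcases ihd F h with h' | hc
        · exact Or.inl h'
        · exact Or.inr (.allS (FTm.fvar x) (by rwa [Fm.subst_self]))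
end
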